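/- arXiv:2001.04287 — 4 statements merged into one kernel-verified Lean document; each statement's English description precedes it below -/
import Mathlib

section
/- For every real α > −1/2 and every x > 0, the Bessel function of the first kind satisfies the pointwise bound |J_α(x)| ≤ (x/2)^α / Γ(α+1). -/
/-!
Integrating the cosine series `cos (x √u) = Σ (-1)ⁿ x²ⁿ uⁿ / (2n)!` termwise against the beta
weight `u^(-1/2) (1 - u)^(α - 1/2)` on `(0, 1]` turns the `n`-th term into a multiple of
`B(n + 1/2, α + 1/2)`; with `Γ(n + 1/2) = (2n - 1)‼ √π / 2ⁿ` this is exactly the `n`-th term of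
the Bessel series, which gives Poisson's representation
`J_α(x) = (x/2)^α / (√π Γ(α + 1/2)) ∫₀¹ cos (x √u) u^(-1/2) (1 - u)^(α - 1/2) du`.
Bounding `|cos|` by `1` leaves `B(1/2, α + 1/2) = √π Γ(α + 1/2) / Γ(α + 1)`.
-/

open MeasureTheory Real

/-- The Bessel function of the first kind `J_ν`, defined for `x > 0` by its power series
`J_ν(x) = Σ_{m=0}^∞ (−1)^m (x/2)^{2m+ν} / (m! Γ(m+ν+1))`, where `1/Γ` vanishes at
nonpositive integers (as does Mathlib's `Real.Gamma`). -/
noncomputable def besselJ (ν : ℝ) (x : ℝ) : ℝ :=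
  ∑' m : ℕ, (-1 : ℝ) ^ m * (x / 2) ^ (2 * (m : ℝ) + ν) /
    ((m.factorial : ℝ) * Real.Gamma ((m : ℝ) + ν + 1))

open Set
open scoped Nat

lemma ofReal_rpow_mul_one_sub_rpow {u : ℝ} (hu : u ∈ Icc (0 : ℝ) 1) (a b : ℝ) :
    ((u ^ (a - 1) * (1 - u) ^ (b - 1) : ℝ) : ℂ) =
      (u : ℂ) ^ ((a : ℂ) - 1) * (1 - (u : ℂ)) ^ ((b : ℂ) - 1) := by
  rw [Complex.ofReal_mul, Complex.ofReal_cpow hu.1, Complex.ofReal_cpow (sub_nonneg.2 hu.2)]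
  push_cast
  rfl

lemma integrableOn_rpow_mul_one_sub_rpow {a b : ℝ} (ha : 0 < a) (hb : 0 < b) :
    IntegrableOn (fun u : ℝ => u ^ (a - 1) * (1 - u) ^ (b - 1)) (Ioc 0 1) := by
  have h := Complex.betaIntegral_convergent (u := a) (v := b) (by simpa) (by simpa)
  rw [intervalIntegrable_iff_integrableOn_Ioc_of_le zero_le_one] at h
  refine IntegrableOn.congr_fun h.re (fun u hu => ?_) measurableSet_Ioc
  rw [← ofReal_rpow_mul_one_sub_rpow (Ioc_subset_Icc_self hu), RCLike.re_to_complex,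
    Complex.ofReal_re]

lemma integral_rpow_mul_one_sub_rpow {a b : ℝ} (ha : 0 < a) (hb : 0 < b) :
    ∫ u in Ioc (0 : ℝ) 1, u ^ (a - 1) * (1 - u) ^ (b - 1) =
      Gamma a * Gamma b / Gamma (a + b) := by
  have hΓ := Complex.Gamma_mul_Gamma_eq_betaIntegral (s := a) (t := b) (by simpa) (by simpa)
  have hB : Complex.betaIntegral a b =
      ((∫ u in Ioc (0 : ℝ) 1, u ^ (a - 1) * (1 - u) ^ (b - 1) : ℝ) : ℂ) := by
    rw [Complex.betaIntegral, intervalIntegral.integral_of_le zero_le_one]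
    refine (setIntegral_congr_fun measurableSet_Ioc fun u hu => ?_).trans integral_ofReal
    exact (ofReal_rpow_mul_one_sub_rpow (Ioc_subset_Icc_self hu) a b).symm
  rw [eq_div_iff (Gamma_pos_of_pos (add_pos ha hb)).ne', mul_comm]
  rw [hB, ← Complex.ofReal_add, Complex.Gamma_ofReal, Complex.Gamma_ofReal,
    Complex.Gamma_ofReal] at hΓ
  exact_mod_cast hΓ.symm

lemma Nat.factorial_two_mul_eq_mul_doubleFactorial (n : ℕ) :
    (2 * n)! = 2 ^ n * n ! * (2 * n - 1)‼ := by
  cases n with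
  | zero => rfl
  | succ n =>
    rw [show 2 * (n + 1) = 2 * n + 1 + 1 by ring, Nat.factorial_eq_mul_doubleFactorial,
      show 2 * n + 1 + 1 = 2 * (n + 1) by ring, Nat.doubleFactorial_two_mul]
    rfl

lemma hasSum_integral_mul_rpow_mul_one_sub_rpow {c : ℕ → ℝ} {f : ℝ → ℝ} {a b : ℝ}
    (ha : 0 < a) (hb : 0 < b) (hc : Summable fun n => |c n|)
    (hf : ∀ u ∈ Ioc (0 : ℝ) 1, HasSum (fun n => c n * u ^ n) (f u)) :
    HasSum (fun n : ℕ => c n * (Gamma (n + a) * Gamma b / Gamma (n + a + b)))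
      (∫ u in Ioc (0 : ℝ) 1, f u * (u ^ (a - 1) * (1 - u) ^ (b - 1))) := by
  set w : ℝ → ℝ := fun u => u ^ (a - 1) * (1 - u) ^ (b - 1)
  have hw := integrableOn_rpow_mul_one_sub_rpow ha hb
  have hw_nonneg : ∀ u ∈ Ioc (0 : ℝ) 1, 0 ≤ w u := fun u hu =>
    mul_nonneg (rpow_nonneg hu.1.le _) (rpow_nonneg (sub_nonneg.2 hu.2) _)
  set F : ℕ → ℝ → ℝ := fun n u => c n * (u ^ ((n : ℝ) + a - 1) * (1 - u) ^ (b - 1))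
  have hF : ∀ n, ∀ u ∈ Ioc (0 : ℝ) 1, F n u = c n * u ^ n * w u := fun n u hu => by
    simp only [F, w, add_sub_assoc, rpow_add hu.1, rpow_natCast]
    ring
  have hnpos : ∀ n : ℕ, 0 < (n : ℝ) + a := fun n => by positivity
  have hF_int : ∀ n : ℕ, ∫ u in Ioc (0 : ℝ) 1, F n u =
      c n * (Gamma (n + a) * Gamma b / Gamma (n + a + b)) := fun n => by
    simp only [F]
    rw [integral_const_mul, integral_rpow_mul_one_sub_rpow (hnpos n) hb]
  simp only [← hF_int]
  refine hasSum_integral_of_dominated_convergence (fun n u => |c n| * w u)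
    (fun n => ((integrableOn_rpow_mul_one_sub_rpow (hnpos n) hb).const_mul (c n)).1)
    (fun n => ae_restrict_of_forall_mem measurableSet_Ioc fun u hu => ?_)
    (ae_of_all _ fun u => hc.mul_right (w u)) ?_
    (ae_restrict_of_forall_mem measurableSet_Ioc fun u hu => ?_)
  · have hun : u ^ n ≤ 1 := pow_le_one₀ hu.1.le hu.2
    rw [hF n u hu, norm_mul, norm_mul, norm_of_nonneg (hw_nonneg u hu),
      norm_of_nonneg (pow_nonneg hu.1.le n), Real.norm_eq_abs]
    exact mul_le_mul_of_nonneg_right (mul_le_of_le_one_right (abs_nonneg _) hun) (hw_nonneg u hu)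
  · simp only [tsum_mul_right]
    exact hw.const_mul _
  · exact ((hf u hu).mul_right (w u)).congr_fun fun n => hF n u hu

lemma besselJ_term_eq {α x : ℝ} (hα : -(1 / 2) < α) (hx : 0 < x) (n : ℕ) :
    (-1 : ℝ) ^ n * (x / 2) ^ (2 * (n : ℝ) + α) / (n ! * Gamma (n + α + 1)) =
      (x / 2) ^ α / (√π * Gamma (α + 1 / 2)) *
        ((-1) ^ n * x ^ (2 * n) / (2 * n)! *
          (Gamma (n + 1 / 2) * Gamma (α + 1 / 2) / Gamma (n + 1 / 2 + (α + 1 / 2)))) := by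
  rw [show (n : ℝ) + 1 / 2 + (α + 1 / 2) = n + α + 1 by ring, Gamma_nat_add_half,
    rpow_add (by positivity), show 2 * (n : ℝ) = (2 * n : ℕ) by push_cast; ring, rpow_natCast,
    Nat.factorial_two_mul_eq_mul_doubleFactorial, div_pow]
  have hΓ := (Gamma_pos_of_pos (by linarith : 0 < α + 1 / 2)).ne'
  generalize Gamma (α + 1 / 2) = Γ at hΓ ⊢
  push_cast
  field_simp
  ring

theorem besselJ_eq_integral_cos {α x : ℝ} (hα : -(1 / 2) < α) (hx : 0 < x) :
    besselJ α x = (x / 2) ^ α / (√π * Gamma (α + 1 / 2)) *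
      ∫ u in Ioc (0 : ℝ) 1,
        cos (x * √u) * (u ^ (1 / 2 - 1 : ℝ) * (1 - u) ^ (α + 1 / 2 - 1)) := by
  have hc : Summable fun n : ℕ => |(-1) ^ n * x ^ (2 * n) / (2 * n)!| := by
    refine (Real.hasSum_cosh x).summable.congr fun n => ?_
    rw [abs_div, abs_mul, abs_pow, abs_neg, abs_one, one_pow, one_mul, abs_of_pos (by positivity),
      abs_of_pos (by positivity)]
  have hcos : ∀ u ∈ Ioc (0 : ℝ) 1,
      HasSum (fun n : ℕ => (-1) ^ n * x ^ (2 * n) / (2 * n)! * u ^ n) (cos (x * √u)) :=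
    fun u hu => (Real.hasSum_cos (x * √u)).congr_fun fun n => by
      rw [mul_pow, pow_mul √u, sq_sqrt hu.1.le]
      ring
  have hS := hasSum_integral_mul_rpow_mul_one_sub_rpow (a := 1 / 2) (by norm_num)
    (by linarith : 0 < α + 1 / 2) hc hcos
  rw [← (hS.mul_left _).tsum_eq, besselJ]
  exact tsum_congr (besselJ_term_eq hα hx)

/-- For `α > −1/2` and `x > 0`, `|J_α(x)| ≤ (x/2)^α / Γ(α+1)`. -/
theorem besselJ_pointwise_bound (α : ℝ) (hα : -(1 / 2 : ℝ) < α) (x : ℝ) (hx : 0 < x) :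
    |besselJ α x| ≤ (x / 2) ^ α / Real.Gamma (α + 1) := by
  have hβ : 0 < α + 1 / 2 := by linarith
  set w : ℝ → ℝ := fun u => u ^ (1 / 2 - 1 : ℝ) * (1 - u) ^ (α + 1 / 2 - 1)
  have hcos : |∫ u in Ioc (0 : ℝ) 1, cos (x * √u) * w u| ≤ ∫ u in Ioc (0 : ℝ) 1, w u := by
    refine norm_integral_le_of_norm_le (f := fun u => cos (x * √u) * w u)
      (integrableOn_rpow_mul_one_sub_rpow one_half_pos hβ)
      (ae_restrict_of_forall_mem measurableSet_Ioc fun u hu => ?_)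
    have hw : 0 ≤ w u := mul_nonneg (rpow_nonneg hu.1.le _) (rpow_nonneg (sub_nonneg.2 hu.2) _)
    rw [norm_mul, norm_of_nonneg hw]
    exact mul_le_of_le_one_left hw (abs_cos_le_one _)
  have hB : ∫ u in Ioc (0 : ℝ) 1, w u = √π * Gamma (α + 1 / 2) / Gamma (α + 1) := by
    rw [integral_rpow_mul_one_sub_rpow (by norm_num) hβ, Gamma_one_half_eq]
    ring_nf
  rw [besselJ_eq_integral_cos hα hx, abs_mul, abs_of_nonneg (by positivity)]
  calc _ ≤ (x / 2) ^ α / (√π * Gamma (α + 1 / 2)) * ∫ u in Ioc (0 : ℝ) 1, w u :=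
        mul_le_mul_of_nonneg_left hcos (by positivity)
    _ = (x / 2) ^ α / Real.Gamma (α + 1) := by
        rw [hB, div_mul_div_cancel₀ (by positivity)]
end

section
/- (Lommel's integral) For every real α > −1/2, every c > 0, and all x, y > 0 with x ≠ y, one has ∫_0^c J_α(tx) J_α(ty) t dt = c · ( y J_{α−1}(cy) J_α(cx) − x J_{α−1}(cx) J_α(cy) ) / (x² − y²), where the integral on the left converges absolutely. -/
open MeasureTheory Real

open Filter Topology Set
open scoped Nat

theorem hasDerivAt_tsum_mul_pow {a : ℕ → ℝ} (ha : ∀ r, Summable fun n => |a n| * r ^ n)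
    (x : ℝ) :
    HasDerivAt (fun w => ∑' n, a n * w ^ n) (∑' n, (n + 1) * a (n + 1) * x ^ n) x := by
  set R := |x| + 1
  have hR : 1 ≤ R := by simp [R]
  have hxR : x ∈ Metric.ball (0 : ℝ) R := by simp [R]
  have hbound : ∀ n, ∀ w ∈ Metric.ball (0 : ℝ) R,
      ‖a n * (n * w ^ (n - 1))‖ ≤ |a n| * (2 * R) ^ n := fun n w hw => by
    have hw : |w| ≤ R := by
      rw [Metric.mem_ball, dist_zero_right, norm_eq_abs] at hw
      exact hw.le
    have hn : (n : ℝ) ≤ 2 ^ n := by exact_mod_cast Nat.lt_two_pow_self.le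
    calc ‖a n * (n * w ^ (n - 1))‖ = |a n| * (n * |w| ^ (n - 1)) := by simp
      _ ≤ |a n| * (2 ^ n * R ^ n) := by
          gcongr
          exact (pow_le_pow_left₀ (abs_nonneg w) hw _).trans (pow_le_pow_right₀ hR (n.sub_le 1))
      _ = |a n| * (2 * R) ^ n := by rw [mul_pow]
  have hderiv := hasDerivAt_tsum_of_isPreconnected (ha (2 * R)) Metric.isOpen_ball
    (convex_ball 0 R).isPreconnected (fun n w _ => (hasDerivAt_pow n w).const_mul (a n))
    hbound hxR ((ha |x|).of_norm_bounded fun n => by simp) hxR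
  have hsum : Summable fun n => a n * (n * x ^ (n - 1)) :=
    (ha (2 * R)).of_norm_bounded fun n => hbound n x hxR
  refine hderiv.congr_deriv ?_
  rw [hsum.tsum_eq_zero_add]
  simp only [Nat.cast_zero, zero_mul, mul_zero, zero_add, Nat.add_sub_cancel, Nat.cast_add_one]
  exact tsum_congr fun n => by ring

theorem mul_inv_Gamma_add_one (s : ℝ) : s * (Gamma (s + 1))⁻¹ = (Gamma s)⁻¹ := by
  rcases eq_or_ne s 0 with rfl | hs
  · simp
  · rw [Gamma_add_one hs, mul_inv, mul_inv_cancel_left₀ hs]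

theorem one_le_Gamma {s : ℝ} (hs : 2 ≤ s) : 1 ≤ Gamma s :=
  Gamma_two ▸ Gamma_strictMonoOn_Ici.monotoneOn (mem_Ici.mpr le_rfl) hs hs

noncomputable def besselCoeff (ν : ℝ) (m : ℕ) : ℝ := (-1) ^ m / (m ! * Gamma (m + ν + 1))

/-- `J_ν x = (x / 2) ^ ν * besselSeries ν ((x / 2) ^ 2)` for `x > 0` (`besselJ_eq`); unlike
`J_ν`, this power series is an entire function of `w = (x / 2) ^ 2` for every `ν`. -/
noncomputable def besselSeries (ν w : ℝ) : ℝ := ∑' m, besselCoeff ν m * w ^ m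

theorem abs_besselCoeff_le {ν : ℝ} {m : ℕ} (hm : 1 - ν ≤ m) :
    |besselCoeff ν m| ≤ (m ! : ℝ)⁻¹ := by
  have hG : 1 ≤ Gamma (m + ν + 1) := one_le_Gamma (by linarith)
  rw [besselCoeff, abs_div, abs_pow, abs_neg, abs_one, one_pow, one_div,
    abs_of_pos (by positivity)]
  exact inv_anti₀ (by positivity) (le_mul_of_one_le_right (by positivity) hG)

theorem summable_abs_besselCoeff_mul_pow (ν r : ℝ) :
    Summable fun m => |besselCoeff ν m| * r ^ m := by
  refine (Real.summable_pow_div_factorial |r|).of_norm_bounded_eventually ?_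
  rw [Nat.cofinite_eq_atTop]
  filter_upwards [tendsto_natCast_atTop_atTop.eventually_ge_atTop (1 - ν)] with m hm
  rw [norm_mul, norm_pow, Real.norm_eq_abs, Real.norm_eq_abs, abs_abs, div_eq_inv_mul]
  exact mul_le_mul_of_nonneg_right (abs_besselCoeff_le hm) (by positivity)

theorem summable_besselCoeff_mul_pow (ν w : ℝ) : Summable fun m => besselCoeff ν m * w ^ m :=
  (summable_abs_besselCoeff_mul_pow ν |w|).of_norm_bounded fun m => by simp

theorem succ_mul_besselCoeff_succ (ν : ℝ) (m : ℕ) :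
    (m + 1) * besselCoeff ν (m + 1) = -besselCoeff (ν + 1) m := by
  have hm : (m ! : ℝ) ≠ 0 := by positivity
  rw [besselCoeff, besselCoeff, Nat.factorial_succ, pow_succ]
  push_cast
  rw [show (m : ℝ) + 1 + ν + 1 = m + (ν + 1) + 1 by ring]
  field_simp

theorem besselCoeff_sub_one_zero (ν : ℝ) : besselCoeff (ν - 1) 0 = ν * besselCoeff ν 0 := by
  simp [besselCoeff, ← mul_inv_Gamma_add_one ν]

theorem besselCoeff_sub_one_succ (ν : ℝ) (m : ℕ) :
    besselCoeff (ν - 1) (m + 1) = ν * besselCoeff ν (m + 1) - besselCoeff (ν + 1) m := by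
  set s : ℝ := m + ν + 1
  have e1 : ((m + 1 : ℕ) : ℝ) + (ν - 1) + 1 = s := by push_cast; ring
  have e2 : ((m + 1 : ℕ) : ℝ) + ν + 1 = s + 1 := by push_cast; ring
  have e3 : (m : ℝ) + (ν + 1) + 1 = s + 1 := by ring
  have hm : (m ! : ℝ) ≠ 0 := by positivity
  simp only [besselCoeff, e1, e2, e3, ← mul_inv_Gamma_add_one s, div_eq_mul_inv, mul_inv,
    Nat.factorial_succ, Nat.cast_mul, pow_succ]
  field_simp
  push_cast
  ring

theorem hasDerivAt_besselSeries (ν w : ℝ) :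
    HasDerivAt (besselSeries ν) (-besselSeries (ν + 1) w) w := by
  refine (hasDerivAt_tsum_mul_pow (summable_abs_besselCoeff_mul_pow ν) w).congr_deriv ?_
  rw [besselSeries, ← tsum_neg]
  exact tsum_congr fun m => by rw [succ_mul_besselCoeff_succ, neg_mul]

@[fun_prop]
theorem differentiable_besselSeries (ν : ℝ) : Differentiable ℝ (besselSeries ν) :=
  fun w => (hasDerivAt_besselSeries ν w).differentiableAt

theorem besselSeries_sub_one (ν w : ℝ) :
    besselSeries (ν - 1) w = ν * besselSeries ν w - w * besselSeries (ν + 1) w := by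
  have hs := summable_besselCoeff_mul_pow
  have hs' : Summable fun m => besselCoeff ν (m + 1) * w ^ (m + 1) :=
    (summable_nat_add_iff 1).mpr (hs ν w)
  calc besselSeries (ν - 1) w
      = besselCoeff (ν - 1) 0 + ∑' m, besselCoeff (ν - 1) (m + 1) * w ^ (m + 1) := by
        rw [besselSeries, (hs _ w).tsum_eq_zero_add, pow_zero, mul_one]
    _ = ν * besselCoeff ν 0 + ∑' m, (ν * (besselCoeff ν (m + 1) * w ^ (m + 1))
          - w * (besselCoeff (ν + 1) m * w ^ m)) := by
        simp_rw [besselCoeff_sub_one_zero, besselCoeff_sub_one_succ, pow_succ]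
        congr 1
        exact tsum_congr fun m => by ring
    _ = ν * (besselCoeff ν 0 + ∑' m, besselCoeff ν (m + 1) * w ^ (m + 1))
          - w * besselSeries (ν + 1) w := by
        rw [(hs'.mul_left ν).tsum_sub ((hs _ w).mul_left w), tsum_mul_left, tsum_mul_left,
          besselSeries]
        ring
    _ = ν * besselSeries ν w - w * besselSeries (ν + 1) w := by
        simp only [besselSeries]
        rw [(hs ν w).tsum_eq_zero_add, pow_zero, mul_one]

theorem besselJ_eq {ν x : ℝ} (hx : 0 < x) :
    besselJ ν x = (x / 2) ^ ν * besselSeries ν ((x / 2) ^ 2) := by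
  rw [besselJ, besselSeries, ← tsum_mul_left]
  refine tsum_congr fun m => ?_
  rw [besselCoeff, rpow_add (by positivity), rpow_mul (by positivity), rpow_natCast, rpow_two,
    ← pow_mul]
  ring

theorem hasDerivAt_besselJ {ν x : ℝ} (hx : 0 < x) :
    HasDerivAt (besselJ ν) (ν / x * besselJ ν x - besselJ (ν + 1) x) x := by
  have hx2 : x / 2 ≠ 0 := by positivity
  have hhalf := (hasDerivAt_id x).div_const 2
  have hP := hhalf.rpow_const (p := ν) (Or.inl hx2)
  have hS := (hasDerivAt_besselSeries ν ((x / 2) ^ 2)).comp x (hhalf.pow 2)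
  refine ((hP.mul hS).congr_of_eventuallyEq ?_).congr_deriv ?_
  · filter_upwards [lt_mem_nhds hx] with z hz using besselJ_eq hz
  · simp only [id, Function.comp_apply, Pi.pow_apply]
    rw [besselJ_eq hx, besselJ_eq hx, rpow_sub_one hx2, rpow_add_one hx2]
    field_simp
    ring

theorem mul_besselJ_sub_one_add_besselJ_add_one {ν x : ℝ} (hx : 0 < x) :
    x * (besselJ (ν - 1) x + besselJ (ν + 1) x) = 2 * ν * besselJ ν x := by
  have hx2 : x / 2 ≠ 0 := by positivity
  rw [besselJ_eq hx, besselJ_eq hx, besselJ_eq hx, besselSeries_sub_one, rpow_sub_one hx2,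
    rpow_add_one hx2]
  field_simp
  ring

noncomputable def lommelWronskian (α x y t : ℝ) : ℝ :=
  t * (y * besselJ (α - 1) (t * y) * besselJ α (t * x)
    - x * besselJ (α - 1) (t * x) * besselJ α (t * y))

theorem hasDerivAt_lommelWronskian {α x y t : ℝ} (hx : 0 < x) (hy : 0 < y) (ht : 0 < t) :
    HasDerivAt (lommelWronskian α x y)
      ((x ^ 2 - y ^ 2) * (besselJ α (t * x) * besselJ α (t * y) * t)) t := by
  have hJ (ν : ℝ) {z : ℝ} (hz : 0 < z) :=
    (hasDerivAt_besselJ (ν := ν) (mul_pos ht hz)).comp t (hasDerivAt_mul_const z)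
  have hu := hJ α hx
  have hv := hJ α hy
  have hp := hJ (α - 1) hx
  have hq := hJ (α - 1) hy
  rw [sub_add_cancel] at hp hq
  have rx := mul_besselJ_sub_one_add_besselJ_add_one (ν := α) (mul_pos ht hx)
  have ry := mul_besselJ_sub_one_add_besselJ_add_one (ν := α) (mul_pos ht hy)
  refine ((hasDerivAt_id t).mul (((hq.const_mul y).mul hu).sub ((hp.const_mul x).mul hv)))
    |>.congr_deriv ?_
  -- the recurrences eliminate `J_{α+1}`
  linear_combination (norm := skip) (-y * besselJ (α - 1) (t * y)) * rx
    + (x * besselJ (α - 1) (t * x)) * ry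
  simp only [id, Function.comp_apply, Pi.mul_apply, Pi.sub_apply]
  field_simp
  ring

theorem besselJ_mul_eq {ν t x : ℝ} (ht : 0 < t) (hx : 0 < x) :
    besselJ ν (t * x) = t ^ ν * (x / 2) ^ ν * besselSeries ν (t ^ 2 * (x / 2) ^ 2) := by
  rw [besselJ_eq (mul_pos ht hx), mul_div_assoc, mul_rpow ht.le (by positivity), mul_pow]

theorem tendsto_lommelWronskian_zero {α x y : ℝ} (hα : -1 < α) (hx : 0 < x) (hy : 0 < y) :
    Tendsto (lommelWronskian α x y) (𝓝[>] 0) (𝓝 0) := by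
  set K : ℝ → ℝ := fun s =>
    besselSeries (α - 1) (s * (y / 2) ^ 2) * besselSeries α (s * (x / 2) ^ 2)
    - besselSeries (α - 1) (s * (x / 2) ^ 2) * besselSeries α (s * (y / 2) ^ 2)
  -- `W(t) = 2 (x/2)^α (y/2)^α t^(2α+2) K(t²) / t²` and `K 0 = 0`
  have hK : HasDerivAt K (deriv K 0) 0 := by
    refine DifferentiableAt.hasDerivAt ?_
    fun_prop
  have hslope : Tendsto (fun s => s⁻¹ * K s) (𝓝[≠] 0) (𝓝 (deriv K 0)) := by
    simpa [K] using hK.tendsto_slope_zero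
  have hsq : Tendsto (fun t : ℝ => t ^ 2) (𝓝[>] 0) (𝓝[≠] 0) := by
    refine tendsto_nhdsWithin_iff.mpr ⟨?_, ?_⟩
    · exact ((continuous_pow 2).tendsto' 0 0 (by simp)).mono_left nhdsWithin_le_nhds
    · filter_upwards [self_mem_nhdsWithin] with t ht using pow_ne_zero 2 (ne_of_gt ht)
  have hpow : Tendsto (fun t : ℝ => t ^ (2 * α + 2)) (𝓝[>] 0) (𝓝 0) := by
    have h := (continuousAt_rpow_const 0 (2 * α + 2) (Or.inr (by linarith))).tendsto
    rw [zero_rpow (by linarith)] at h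
    exact h.mono_left nhdsWithin_le_nhds
  have hlim := (hpow.mul (hslope.comp hsq)).const_mul (2 * (x / 2) ^ α * (y / 2) ^ α)
  rw [zero_mul, mul_zero] at hlim
  refine hlim.congr' ?_
  filter_upwards [self_mem_nhdsWithin] with t ht
  have ht : 0 < t := ht
  have hx2 : x / 2 ≠ 0 := by positivity
  have hy2 : y / 2 ≠ 0 := by positivity
  have e : t ^ (2 * α + 2) = t ^ α * t ^ α * t ^ 2 := by
    rw [show 2 * α + 2 = α + α + ((2 : ℕ) : ℝ) by push_cast; ring, rpow_add_natCast ht.ne',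
      rpow_add ht]
  simp only [lommelWronskian, Function.comp_apply, K]
  rw [besselJ_mul_eq ht hx, besselJ_mul_eq ht hy, besselJ_mul_eq ht hx, besselJ_mul_eq ht hy, e,
    rpow_sub_one ht.ne', rpow_sub_one hx2, rpow_sub_one hy2]
  field_simp

theorem integrableOn_besselJ_mul_besselJ_mul {α x y : ℝ} (hα : -1 < α) (hx : 0 < x)
    (hy : 0 < y) (c : ℝ) :
    IntegrableOn (fun t => besselJ α (t * x) * besselJ α (t * y) * t) (Ioc 0 c) := by
  have hpow : IntegrableOn (fun t : ℝ => t ^ (2 * α + 1)) (uIcc 0 c) := by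
    rw [← intervalIntegrable_iff']
    exact intervalIntegral.intervalIntegrable_rpow' (by linarith)
  have hprod := hpow.mul_continuousOn (g' := fun t => (x / 2) ^ α * (y / 2) ^ α *
    (besselSeries α (t ^ 2 * (x / 2) ^ 2) * besselSeries α (t ^ 2 * (y / 2) ^ 2)))
    (by fun_prop : Differentiable ℝ _).continuous.continuousOn isCompact_uIcc
  refine (hprod.mono_set (Ioc_subset_Icc_self.trans Icc_subset_uIcc)).congr_fun
    (fun t ht => ?_) measurableSet_Ioc
  have ht : 0 < t := ht.1
  have e : t ^ (2 * α + 1) = t ^ α * t ^ α * t := by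
    rw [show 2 * α + 1 = α + α + 1 by ring, rpow_add_one ht.ne', rpow_add ht]
  beta_reduce
  rw [besselJ_mul_eq ht hx, besselJ_mul_eq ht hy, e]
  ring

/-- Lommel's integral: for `α > −1/2`, `c > 0`, and `x, y > 0` with `x ≠ y`,
`∫_0^c J_α(tx) J_α(ty) t dt
  = c (y J_{α−1}(cy) J_α(cx) − x J_{α−1}(cx) J_α(cy)) / (x² − y²)`,
and the integrand is absolutely integrable on `(0, c]`. -/
theorem lommel_integral (α c x y : ℝ) (hα : -(1 / 2 : ℝ) < α) (hc : 0 < c)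
    (hx : 0 < x) (hy : 0 < y) (hxy : x ≠ y) :
    IntegrableOn (fun t : ℝ => besselJ α (t * x) * besselJ α (t * y) * t) (Set.Ioc 0 c) ∧
    ∫ t in Set.Ioc (0 : ℝ) c, besselJ α (t * x) * besselJ α (t * y) * t =
      c * (y * besselJ (α - 1) (c * y) * besselJ α (c * x)
          - x * besselJ (α - 1) (c * x) * besselJ α (c * y)) / (x ^ 2 - y ^ 2) := by
  have hα' : -1 < α := by linarith
  have hint := integrableOn_besselJ_mul_besselJ_mul hα' hx hy c
  refine ⟨hint, ?_⟩
  have hxy2 : x ^ 2 - y ^ 2 ≠ 0 :=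
    sub_ne_zero.mpr fun h => hxy ((pow_left_inj₀ hx.le hy.le two_ne_zero).mp h)
  have hFTC := intervalIntegral.integral_eq_sub_of_hasDerivAt_of_tendsto hc
    (fun t ht => hasDerivAt_lommelWronskian hx hy ht.1)
    ((intervalIntegrable_iff_integrableOn_Ioc_of_le hc.le).mpr (hint.const_mul _))
    (tendsto_lommelWronskian_zero hα' hx hy)
    ((hasDerivAt_lommelWronskian hx hy hc).continuousAt.tendsto.mono_left nhdsWithin_le_nhds)
  rw [intervalIntegral.integral_of_le hc.le, integral_const_mul, sub_zero] at hFTC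
  rw [eq_div_iff hxy2, mul_comm, hFTC, lommelWronskian]
end

section
/- Let c > 0, M > 0 and n₀ ∈ ℕ. Suppose complex coefficients (b^n_k)_{n,k ∈ ℕ} satisfy, for all n ≥ n₀: |b^n_0| ≤ M n^{−2} and |b^n_k| ≤ M n^{−|k−n|} for all k ≥ 1. Then for every R > 0 there exists a constant C > 0 such that for all n ≥ max(n₀, 2) and all x ∈ (0, R], the series Σ_{k=0}^∞ b^n_k j_{k,c}(x) converges absolutely and Σ_{k=0}^∞ |b^n_k| |j_{k,c}(x)| ≤ C n^{−2}. -/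
open MeasureTheory Real

/-- The dilated spherical Bessel function
`j_{n,c}(x) = √((2n+1)/2) · J_{n+1/2}(cx) / √x` for `x > 0`. -/
noncomputable def sphBesselJ (c : ℝ) (n : ℕ) (x : ℝ) : ℝ :=
  Real.sqrt ((2 * (n : ℝ) + 1) / 2) * besselJ ((n : ℝ) + 1 / 2) (c * x) / Real.sqrt x

lemma gamma_le_aux {ν : ℝ} (hν : 0 ≤ ν) (m : ℕ) :
    Real.Gamma (ν + 1) ≤ Real.Gamma ((m : ℝ) + ν + 1) := by
  induction m with
  | zero => simp
  | succ m ih =>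
      have h0 : (0:ℝ) < (m : ℝ) + ν + 1 := by positivity
      have h2 : ((m + 1 : ℕ) : ℝ) + ν + 1 = ((m : ℝ) + ν + 1) + 1 := by push_cast; ring
      rw [h2, Real.Gamma_add_one h0.ne']
      have hg : 0 < Real.Gamma ((m : ℝ) + ν + 1) := Real.Gamma_pos_of_pos h0
      nlinarith [Nat.cast_nonneg (α := ℝ) m]

lemma gamma_factorial_le (k : ℕ) :
    Real.Gamma (3/2) * (k.factorial : ℝ) ≤ Real.Gamma ((k : ℝ) + 3/2) := by
  induction k with
  | zero => simp
  | succ k ih =>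
      have h0 : (0:ℝ) < (k : ℝ) + 3/2 := by positivity
      have h2 : ((k + 1 : ℕ) : ℝ) + 3/2 = ((k : ℝ) + 3/2) + 1 := by push_cast; ring
      rw [h2, Real.Gamma_add_one h0.ne']
      have hg : 0 < Real.Gamma ((k : ℝ) + 3/2) := Real.Gamma_pos_of_pos h0
      have : ((k+1 : ℕ).factorial : ℝ) = ((k:ℝ)+1) * (k.factorial : ℝ) := by
        rw [Nat.factorial_succ]; push_cast; ring
      rw [this]
      have hG32 : 0 < Real.Gamma (3/2) := Real.Gamma_pos_of_pos (by norm_num)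
      nlinarith [(Nat.cast_pos (α := ℝ)).mpr k.factorial_pos]

lemma besselJ_term_abs_le {ν x : ℝ} (hν : 0 ≤ ν) (hx : 0 < x) (m : ℕ) :
    |(-1 : ℝ) ^ m * (x / 2) ^ (2 * (m : ℝ) + ν) /
      ((m.factorial : ℝ) * Real.Gamma ((m : ℝ) + ν + 1))| ≤
    (x/2) ^ ν / Real.Gamma (ν + 1) * (((x/2)^2) ^ m / m.factorial) := by
  have hy : (0:ℝ) < x / 2 := by linarith
  have hG : 0 < Real.Gamma ((m : ℝ) + ν + 1) := Real.Gamma_pos_of_pos (by positivity)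
  have hG1 : 0 < Real.Gamma (ν + 1) := Real.Gamma_pos_of_pos (by positivity)
  have hf : (0:ℝ) < (m.factorial : ℝ) := Nat.cast_pos.mpr m.factorial_pos
  have hsplit : (x/2) ^ (2 * (m : ℝ) + ν) = ((x/2)^2) ^ m * (x/2) ^ ν := by
    rw [Real.rpow_add hy]
    congr 1
    rw [show (2 * (m:ℝ)) = ((2*m : ℕ) : ℝ) by push_cast; ring, Real.rpow_natCast, pow_mul]
  have habs : |(-1 : ℝ) ^ m * (x / 2) ^ (2 * (m : ℝ) + ν) /
      ((m.factorial : ℝ) * Real.Gamma ((m : ℝ) + ν + 1))| =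
      (x / 2) ^ (2 * (m : ℝ) + ν) / ((m.factorial : ℝ) * Real.Gamma ((m : ℝ) + ν + 1)) := by
    rw [abs_div, abs_mul, abs_pow, abs_neg, abs_one, one_pow, one_mul,
      abs_of_pos (Real.rpow_pos_of_pos hy _), abs_of_pos (by positivity)]
  rw [habs, hsplit]
  have key := gamma_le_aux hν m
  calc ((x/2)^2) ^ m * (x/2) ^ ν / ((m.factorial : ℝ) * Real.Gamma ((m : ℝ) + ν + 1))
      ≤ ((x/2)^2) ^ m * (x/2) ^ ν / ((m.factorial : ℝ) * Real.Gamma (ν + 1)) := by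
        have hnum : (0:ℝ) ≤ ((x/2)^2) ^ m * (x/2) ^ ν := by positivity
        gcongr
    _ = (x/2) ^ ν / Real.Gamma (ν + 1) * (((x/2)^2) ^ m / m.factorial) := by
        field_simp

lemma besselJ_abs_summable {ν x : ℝ} (hν : 0 ≤ ν) (hx : 0 < x) :
    Summable (fun m : ℕ => |(-1 : ℝ) ^ m * (x / 2) ^ (2 * (m : ℝ) + ν) /
      ((m.factorial : ℝ) * Real.Gamma ((m : ℝ) + ν + 1))|) := by
  apply Summable.of_nonneg_of_le (fun m => abs_nonneg _) (besselJ_term_abs_le hν hx)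
  exact (Real.summable_pow_div_factorial ((x/2)^2)).mul_left _

lemma besselJ_abs_le {ν x : ℝ} (hν : 0 ≤ ν) (hx : 0 < x) :
    |besselJ ν x| ≤ (x/2) ^ ν * Real.exp ((x/2)^2) / Real.Gamma (ν + 1) := by
  have hs := besselJ_abs_summable hν hx
  have h1 : |besselJ ν x| ≤ ∑' m : ℕ, |(-1 : ℝ) ^ m * (x / 2) ^ (2 * (m : ℝ) + ν) /
      ((m.factorial : ℝ) * Real.Gamma ((m : ℝ) + ν + 1))| := by
    simpa only [besselJ, Real.norm_eq_abs] using norm_tsum_le_tsum_norm (f := fun m : ℕ =>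
      (-1 : ℝ) ^ m * (x / 2) ^ (2 * (m : ℝ) + ν) /
      ((m.factorial : ℝ) * Real.Gamma ((m : ℝ) + ν + 1))) hs
  have h2 : ∑' m : ℕ, |(-1 : ℝ) ^ m * (x / 2) ^ (2 * (m : ℝ) + ν) /
      ((m.factorial : ℝ) * Real.Gamma ((m : ℝ) + ν + 1))| ≤
      ∑' m : ℕ, (x/2) ^ ν / Real.Gamma (ν + 1) * (((x/2)^2) ^ m / m.factorial) :=
    Summable.tsum_le_tsum (besselJ_term_abs_le hν hx) hs
      ((Real.summable_pow_div_factorial ((x/2)^2)).mul_left _)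
  have h3 : ∑' m : ℕ, (x/2) ^ ν / Real.Gamma (ν + 1) * (((x/2)^2) ^ m / m.factorial)
      = (x/2) ^ ν / Real.Gamma (ν + 1) * ∑' m : ℕ, (((x/2)^2) ^ m / (m.factorial : ℝ)) :=
    tsum_mul_left
  have h4 : ∑' m : ℕ, (((x/2)^2) ^ m / (m.factorial : ℝ)) ≤ Real.exp ((x/2)^2) :=
    Real.tsum_le_of_sum_range_le (fun m => by positivity)
      (fun n => Real.sum_le_exp_of_nonneg (by positivity) n)
  have hD : (0:ℝ) ≤ (x/2) ^ ν / Real.Gamma (ν + 1) := by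
    have := Real.Gamma_pos_of_pos (show (0:ℝ) < ν + 1 by positivity)
    positivity
  calc |besselJ ν x| ≤ _ := h1
    _ ≤ _ := h2
    _ = _ := h3
    _ ≤ (x/2) ^ ν / Real.Gamma (ν + 1) * Real.exp ((x/2)^2) := by
        exact mul_le_mul_of_nonneg_left h4 hD
    _ = (x/2) ^ ν * Real.exp ((x/2)^2) / Real.Gamma (ν + 1) := by ring

lemma sqrt_four : Real.sqrt 4 = 2 := by
  rw [show (4:ℝ) = 2^2 by norm_num, Real.sqrt_sq (by norm_num : (0:ℝ) ≤ 2)]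

lemma sphBesselJ_abs_le {c R : ℝ} (hc : 0 < c) (hR : 0 < R) (k : ℕ) {x : ℝ}
    (hx : 0 < x) (hxR : x ≤ R) :
    |sphBesselJ c k x| ≤ Real.sqrt ((2*(k:ℝ)+1)*c) / 2 *
      ((c*R/2)^k * Real.exp ((c*R/2)^2)) / Real.Gamma ((k:ℝ) + 3/2) := by
  have hcx : 0 < c * x := by positivity
  have hG : 0 < Real.Gamma ((k:ℝ) + 3/2) := Real.Gamma_pos_of_pos (by positivity)
  have hb := besselJ_abs_le (ν := (k:ℝ) + 1/2) (x := c*x) (by positivity) hcx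
  rw [show (k:ℝ) + 1/2 + 1 = (k:ℝ) + 3/2 by ring] at hb
  have hsplit : (c*x/2) ^ ((k:ℝ) + 1/2) = (c*x/2)^k * Real.sqrt (c*x/2) := by
    rw [Real.rpow_add (by positivity), Real.rpow_natCast, Real.sqrt_eq_rpow]
  have hsqrt : Real.sqrt (c*x/2) = Real.sqrt (c/2) * Real.sqrt x := by
    rw [← Real.sqrt_mul (by positivity : (0:ℝ) ≤ c/2)]; ring_nf
  rw [hsplit, hsqrt] at hb
  have hS : (0:ℝ) ≤ Real.sqrt ((2*(k:ℝ)+1)/2) := Real.sqrt_nonneg _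
  have hsx : (0:ℝ) < Real.sqrt x := Real.sqrt_pos.mpr hx
  have habs : |sphBesselJ c k x| = Real.sqrt ((2*(k:ℝ)+1)/2) *
      |besselJ ((k:ℝ) + 1/2) (c*x)| / Real.sqrt x := by
    rw [sphBesselJ, abs_div, abs_mul, abs_of_nonneg hS, abs_of_pos hsx]
  have hprod : Real.sqrt ((2*(k:ℝ)+1)/2) * Real.sqrt (c/2)
      = Real.sqrt ((2*(k:ℝ)+1)*c) / 2 := by
    rw [← Real.sqrt_mul (by positivity),
      show (2*(k:ℝ)+1)/2 * (c/2) = ((2*(k:ℝ)+1)*c)/4 by ring,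
      Real.sqrt_div (by positivity), sqrt_four]
  rw [habs]
  calc Real.sqrt ((2*(k:ℝ)+1)/2) * |besselJ ((k:ℝ) + 1/2) (c*x)| / Real.sqrt x
      ≤ Real.sqrt ((2*(k:ℝ)+1)/2) * ((c*x/2)^k * (Real.sqrt (c/2) * Real.sqrt x) *
          Real.exp ((c*x/2)^2) / Real.Gamma ((k:ℝ) + 3/2)) / Real.sqrt x := by
        gcongr
    _ = (Real.sqrt ((2*(k:ℝ)+1)/2) * Real.sqrt (c/2)) *
          ((c*x/2)^k * Real.exp ((c*x/2)^2)) / Real.Gamma ((k:ℝ) + 3/2) := by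
        set S := Real.sqrt ((2*(k:ℝ)+1)/2)
        set s := Real.sqrt (c/2)
        set t := Real.sqrt x
        set A := (c*x/2)^k
        set E := Real.exp ((c*x/2)^2)
        field_simp
    _ ≤ Real.sqrt ((2*(k:ℝ)+1)*c) / 2 *
          ((c*R/2)^k * Real.exp ((c*R/2)^2)) / Real.Gamma ((k:ℝ) + 3/2) := by
        rw [hprod]
        have h1 : c*x/2 ≤ c*R/2 := by nlinarith
        gcongr

lemma poly_le_exp (k : ℕ) : ((k:ℝ)+2)^2 * ((k:ℝ)+1) ≤ 8 * 8^k := by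
  induction k with
  | zero => norm_num
  | succ k ih =>
      have hk : (0:ℝ) ≤ (k:ℝ) := Nat.cast_nonneg k
      have h8 : (1:ℝ) ≤ 8^k := one_le_pow₀ (by norm_num)
      have step : ((k:ℝ)+3)^2*((k:ℝ)+2) ≤ 8*(((k:ℝ)+2)^2*((k:ℝ)+1)) := by nlinarith
      push_cast
      calc ((k:ℝ)+1+2)^2 * ((k:ℝ)+1+1) = ((k:ℝ)+3)^2*((k:ℝ)+2) := by ring
        _ ≤ 8*(((k:ℝ)+2)^2*((k:ℝ)+1)) := step
        _ ≤ 8*(8*8^k) := by linarith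
        _ = 8*8^(k+1) := by ring

lemma coeff_bound {c : ℝ} (hc : 0 ≤ c) (k : ℕ) :
    ((k:ℝ)+2)^2 * Real.sqrt ((2*(k:ℝ)+1)*c) ≤ 8 * 8^k * Real.sqrt c := by
  have h1 : Real.sqrt ((2*(k:ℝ)+1)*c) = Real.sqrt (2*(k:ℝ)+1) * Real.sqrt c :=
    Real.sqrt_mul (by positivity) c
  have h2 : Real.sqrt (2*(k:ℝ)+1) ≤ (k:ℝ)+1 := by
    calc Real.sqrt (2*(k:ℝ)+1) ≤ Real.sqrt (((k:ℝ)+1)^2) := Real.sqrt_le_sqrt (by nlinarith)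
      _ = (k:ℝ)+1 := Real.sqrt_sq (by positivity)
  have h3 := poly_le_exp k
  have hsc : 0 ≤ Real.sqrt c := Real.sqrt_nonneg _
  rw [h1]
  calc ((k:ℝ)+2)^2 * (Real.sqrt (2*(k:ℝ)+1) * Real.sqrt c)
      ≤ ((k:ℝ)+2)^2 * (((k:ℝ)+1) * Real.sqrt c) := by gcongr
    _ = (((k:ℝ)+2)^2 * ((k:ℝ)+1)) * Real.sqrt c := by ring
    _ ≤ 8 * 8^k * Real.sqrt c := by gcongr

lemma A_le_g {c R : ℝ} (hc : 0 < c) (hR : 0 < R) (k : ℕ) :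
    ((k:ℝ)+2)^2 * (Real.sqrt ((2*(k:ℝ)+1)*c) / 2 *
      ((c*R/2)^k * Real.exp ((c*R/2)^2)) / Real.Gamma ((k:ℝ) + 3/2)) ≤
    (8 * Real.sqrt c * Real.exp ((c*R/2)^2) / Real.Gamma (3/2)) *
      ((8*c*R)^k / k.factorial) := by
  have hG32 : 0 < Real.Gamma (3/2) := Real.Gamma_pos_of_pos (by norm_num)
  have hGk : 0 < Real.Gamma ((k:ℝ)+3/2) := Real.Gamma_pos_of_pos (by positivity)
  have hfac : (0:ℝ) < (k.factorial : ℝ) := Nat.cast_pos.mpr k.factorial_pos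
  have hgf := gamma_factorial_le k
  have hcoef := coeff_bound hc.le k
  have hE : 0 < Real.exp ((c*R/2)^2) := Real.exp_pos _
  have hs : 0 ≤ Real.sqrt ((2*(k:ℝ)+1)*c) := Real.sqrt_nonneg _
  have hsc : 0 ≤ Real.sqrt c := Real.sqrt_nonneg _
  have hpow : (0:ℝ) ≤ (c*R/2)^k := by positivity
  calc ((k:ℝ)+2)^2 * (Real.sqrt ((2*(k:ℝ)+1)*c) / 2 *
        ((c*R/2)^k * Real.exp ((c*R/2)^2)) / Real.Gamma ((k:ℝ) + 3/2))
      ≤ ((k:ℝ)+2)^2 * (Real.sqrt ((2*(k:ℝ)+1)*c) / 2 *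
        ((c*R/2)^k * Real.exp ((c*R/2)^2)) / (Real.Gamma (3/2) * k.factorial)) := by
        gcongr
    _ = (((k:ℝ)+2)^2 * Real.sqrt ((2*(k:ℝ)+1)*c)) * ((c*R/2)^k * Real.exp ((c*R/2)^2)) /
        (2 * (Real.Gamma (3/2) * k.factorial)) := by ring
    _ ≤ (8 * 8^k * Real.sqrt c) * ((c*R/2)^k * Real.exp ((c*R/2)^2)) /
        (2 * (Real.Gamma (3/2) * k.factorial)) := by gcongr
    _ = (4 * Real.sqrt c * Real.exp ((c*R/2)^2) / Real.Gamma (3/2)) *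
        ((4*c*R)^k / k.factorial) := by
        have h8 : (8:ℝ)^k * (c*R/2)^k = (4*c*R)^k := by
          rw [← mul_pow, show (8:ℝ) * (c*R/2) = 4*c*R by ring]
        rw [← h8]
        set p := (c*R/2)^k
        set q := (8:ℝ)^k
        set E := Real.exp ((c*R/2)^2)
        set G := Real.Gamma (3/2)
        set F := (k.factorial : ℝ)
        field_simp
        ring
    _ ≤ (8 * Real.sqrt c * Real.exp ((c*R/2)^2) / Real.Gamma (3/2)) *
        ((8*c*R)^k / k.factorial) := by
        gcongr
        · linarith
        · linarith

lemma b_bound {M : ℝ} (hM : 0 < M) {n₀ : ℕ} {b : ℕ → ℕ → ℂ}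
    (hb0 : ∀ n : ℕ, n₀ ≤ n → ‖b n 0‖ ≤ M / (n : ℝ) ^ 2)
    (hbk : ∀ n : ℕ, n₀ ≤ n → ∀ k : ℕ, 1 ≤ k →
      ‖b n k‖ ≤ M / (n : ℝ) ^ (((k : ℤ) - (n : ℤ)).natAbs))
    {n : ℕ} (hn0 : n₀ ≤ n) (hn2 : 2 ≤ n) (k : ℕ) :
    ‖b n k‖ ≤ M * ((k:ℝ)+2)^2 / (n:ℝ)^2 := by
  have hn1 : (1:ℝ) ≤ (n:ℝ) := by exact_mod_cast le_trans one_le_two hn2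
  have hnpos : (0:ℝ) < (n:ℝ)^2 := by positivity
  rcases Nat.eq_zero_or_pos k with rfl | hk
  · calc ‖b n 0‖ ≤ M / (n:ℝ)^2 := hb0 n hn0
      _ ≤ M * (((0:ℕ):ℝ)+2)^2 / (n:ℝ)^2 := by
          apply (div_le_div_iff_of_pos_right hnpos).mpr
          push_cast
          nlinarith
  · have h := hbk n hn0 k hk
    set j := ((k:ℤ) - (n:ℤ)).natAbs with hj
    by_cases hj2 : 2 ≤ j
    · have hpow : (n:ℝ)^2 ≤ (n:ℝ)^j := pow_le_pow_right₀ hn1 hj2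
      calc ‖b n k‖ ≤ M / (n:ℝ)^j := h
        _ ≤ M / (n:ℝ)^2 := by gcongr
        _ ≤ M * ((k:ℝ)+2)^2 / (n:ℝ)^2 := by
            apply (div_le_div_iff_of_pos_right hnpos).mpr
            have h1k : (1:ℝ) ≤ ((k:ℝ)+2)^2 := by nlinarith [Nat.cast_nonneg (α := ℝ) k]
            exact le_mul_of_one_le_right hM.le h1k
    · push_neg at hj2
      have hnk : (n:ℤ) ≤ (k:ℤ) + 1 := by omega
      have hnkR : (n:ℝ) ≤ (k:ℝ) + 1 := by exact_mod_cast hnk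
      have h1 : (1:ℝ) ≤ (n:ℝ)^j := one_le_pow₀ hn1
      calc ‖b n k‖ ≤ M / (n:ℝ)^j := h
        _ ≤ M := div_le_self hM.le h1
        _ ≤ M * ((k:ℝ)+2)^2 / (n:ℝ)^2 := by
            rw [le_div_iff₀ hnpos]
            have hn0' : (0:ℝ) ≤ (n:ℝ) := by positivity
            have h2 : (n:ℝ)^2 ≤ ((k:ℝ)+2)^2 := by nlinarith
            calc M * (n:ℝ)^2 ≤ M * ((k:ℝ)+2)^2 := mul_le_mul_of_nonneg_left h2 hM.le
              _ = M * ((k:ℝ)+2)^2 := rfl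


/-- If coefficients `b^n_k` satisfy `|b^n_0| ≤ M n^{−2}` and `|b^n_k| ≤ M n^{−|k−n|}` (`k ≥ 1`)
for `n ≥ n₀`, then for every `R > 0` there is `C > 0` such that for all `n ≥ max(n₀, 2)` and
`x ∈ (0, R]`, the series `Σ_k b^n_k j_{k,c}(x)` converges absolutely with
`Σ_k |b^n_k||j_{k,c}(x)| ≤ C n^{−2}`. -/
theorem sphBesselJ_series_bound (c : ℝ) (hc : 0 < c) (M : ℝ) (hM : 0 < M) (n₀ : ℕ)
    (b : ℕ → ℕ → ℂ)
    (hb0 : ∀ n : ℕ, n₀ ≤ n → ‖b n 0‖ ≤ M / (n : ℝ) ^ 2)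
    (hbk : ∀ n : ℕ, n₀ ≤ n → ∀ k : ℕ, 1 ≤ k →
      ‖b n k‖ ≤ M / (n : ℝ) ^ (((k : ℤ) - (n : ℤ)).natAbs)) :
    ∀ R > (0 : ℝ), ∃ C > 0, ∀ n : ℕ, max n₀ 2 ≤ n → ∀ x : ℝ, 0 < x → x ≤ R →
      Summable (fun k : ℕ => ‖b n k‖ * |sphBesselJ c k x|) ∧
      ∑' k : ℕ, ‖b n k‖ * |sphBesselJ c k x| ≤ C / (n : ℝ) ^ 2 := by
  intro R hR
  have hG32 : 0 < Real.Gamma (3/2) := Real.Gamma_pos_of_pos (by norm_num)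
  set K := 8 * Real.sqrt c * Real.exp ((c*R/2)^2) / Real.Gamma (3/2) with hK
  have hKpos : 0 < K := div_pos (by positivity) hG32
  have hgsum : Summable (fun k : ℕ => K * ((8*c*R)^k / (k.factorial : ℝ))) :=
    (Real.summable_pow_div_factorial (8*c*R)).mul_left K
  set T := ∑' k : ℕ, K * ((8*c*R)^k / (k.factorial : ℝ)) with hT
  have hT0 : 0 ≤ T := tsum_nonneg (fun k => by positivity)
  refine ⟨M*T + 1, by nlinarith, ?_⟩
  intro n hn x hx hxR
  have hn0 : n₀ ≤ n := le_trans (le_max_left _ _) hn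
  have hn2 : 2 ≤ n := le_trans (le_max_right _ _) hn
  have hnpos : (0:ℝ) < (n:ℝ)^2 := by
    have : (0:ℕ) < n := lt_of_lt_of_le (by norm_num) hn2
    positivity
  have hpt : ∀ k : ℕ, ‖b n k‖ * |sphBesselJ c k x| ≤
      M/(n:ℝ)^2 * (K * ((8*c*R)^k / (k.factorial : ℝ))) := by
    intro k
    have hGk : 0 < Real.Gamma ((k:ℝ)+3/2) := Real.Gamma_pos_of_pos (by positivity)
    have h1 := b_bound hM hb0 hbk hn0 hn2 k
    have h2 := sphBesselJ_abs_le hc hR k hx hxR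
    have h3 := A_le_g hc hR (R := R) k
    have hA_nonneg : 0 ≤ Real.sqrt ((2*(k:ℝ)+1)*c) / 2 *
        ((c*R/2)^k * Real.exp ((c*R/2)^2)) / Real.Gamma ((k:ℝ) + 3/2) := by positivity
    calc ‖b n k‖ * |sphBesselJ c k x|
        ≤ (M * ((k:ℝ)+2)^2 / (n:ℝ)^2) * (Real.sqrt ((2*(k:ℝ)+1)*c) / 2 *
            ((c*R/2)^k * Real.exp ((c*R/2)^2)) / Real.Gamma ((k:ℝ) + 3/2)) :=
          mul_le_mul h1 h2 (abs_nonneg _) (by positivity)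
      _ = M/(n:ℝ)^2 * (((k:ℝ)+2)^2 * (Real.sqrt ((2*(k:ℝ)+1)*c) / 2 *
            ((c*R/2)^k * Real.exp ((c*R/2)^2)) / Real.Gamma ((k:ℝ) + 3/2))) := by ring
      _ ≤ M/(n:ℝ)^2 * (K * ((8*c*R)^k / (k.factorial : ℝ))) := by
          apply mul_le_mul_of_nonneg_left h3 (by positivity)
  have hbsum : Summable (fun k : ℕ => M/(n:ℝ)^2 * (K * ((8*c*R)^k / (k.factorial : ℝ)))) :=
    hgsum.mul_left _
  have hsum : Summable (fun k : ℕ => ‖b n k‖ * |sphBesselJ c k x|) :=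
    Summable.of_nonneg_of_le (fun k => by positivity) hpt hbsum
  refine ⟨hsum, ?_⟩
  have htle := Summable.tsum_le_tsum hpt hsum hbsum
  rw [tsum_mul_left, ← hT] at htle
  calc ∑' k : ℕ, ‖b n k‖ * |sphBesselJ c k x| ≤ M/(n:ℝ)^2 * T := htle
    _ = M*T/(n:ℝ)^2 := by ring
    _ ≤ (M*T+1)/(n:ℝ)^2 := by gcongr; linarith
end

section
/- Let α > −1/2, c > 0, M > 0 and n₀ ∈ ℕ. Suppose complex coefficients (b^n_k)_{n,k ∈ ℕ} satisfy, for all n ≥ n₀: |b^n_0| ≤ M n^{−2} and |b^n_k| ≤ M n^{−|k−n|} for all k ≥ 1. Then for every R > 0 there exists a constant C > 0 such that for all n ≥ max(n₀, 2) and all x ∈ (0, R], the series Σ_{k=0}^∞ b^n_k j^α_{k,c}(x) converges absolutely and Σ_{k=0}^∞ |b^n_k| |j^α_{k,c}(x)| ≤ C n^{−2}. -/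
open MeasureTheory Real

/-- The Hankel spherical Bessel function
`j^α_{n,c}(x) = √(2(2n+α+1)) · J_{2n+α+1}(cx) / √x` for `x > 0`. -/
noncomputable def hankelSphBesselJ (α c : ℝ) (n : ℕ) (x : ℝ) : ℝ :=
  Real.sqrt (2 * (2 * (n : ℝ) + α + 1)) * besselJ (2 * (n : ℝ) + α + 1) (c * x) / Real.sqrt x

lemma my_exp_tsum (x : ℝ) : (∑' n : ℕ, x ^ n / (n.factorial : ℝ)) = Real.exp x := by
  rw [Real.exp_eq_exp_ℝ, NormedSpace.exp_eq_tsum_div]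

lemma my_nat_fact : ∀ k : ℕ, 2 * k + 1 ≤ 3 * k.factorial := by
  intro k
  induction k with
  | zero => simp
  | succ k ih =>
    rcases Nat.eq_zero_or_pos k with rfl | hk
    · simp [Nat.factorial]
    · have hf : 1 ≤ k.factorial := Nat.one_le_iff_ne_zero.mpr (Nat.factorial_ne_zero k)
      have h2 : 3 ≤ 3 * k.factorial * k :=
        le_trans (by omega) (Nat.mul_le_mul (Nat.mul_le_mul_left 3 hf) hk)
      calc 2 * (k + 1) + 1 = (2 * k + 1) + 2 := by ring
        _ ≤ 3 * k.factorial + 2 := Nat.add_le_add_right ih 2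
        _ ≤ 3 * k.factorial + 3 * k.factorial * k := by omega
        _ = 3 * (k + 1).factorial := by rw [Nat.factorial_succ]; ring

lemma my_sq (n : ℕ) : (n : ℝ) ^ 2 ≤ 2 * 2 ^ n := by
  induction n with
  | zero => norm_num
  | succ n ih =>
    have h : ((n : ℝ) + 1) ≤ 2 ^ n := by
      have := Nat.lt_two_pow_self (n := n)
      exact_mod_cast this
    push_cast
    have hp : (2:ℝ) ^ (n + 1) = 2 * 2 ^ n := by rw [pow_succ]; ring
    nlinarith [ih, hp]

lemma my_gamma_lower (ν : ℝ) (hν : 0 < ν) : ∀ m : ℕ,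
    (m.factorial : ℝ) * Real.Gamma (ν + 1) ≤ Real.Gamma ((m : ℝ) + ν + 1) := by
  intro m
  induction m with
  | zero => simp
  | succ m ih =>
    have hm : (0:ℝ) ≤ m := Nat.cast_nonneg m
    have h1 : ((m : ℝ) + ν + 1) ≠ 0 := by linarith
    have h2 : ((m + 1 : ℕ) : ℝ) + ν + 1 = ((m : ℝ) + ν + 1) + 1 := by push_cast; ring
    rw [h2, Real.Gamma_add_one h1]
    have h3 : ((m + 1).factorial : ℝ) = ((m:ℝ) + 1) * m.factorial := by
      rw [Nat.factorial_succ]; push_cast; ring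
    rw [h3]
    have hΓ : 0 < Real.Gamma (ν + 1) := Real.Gamma_pos_of_pos (by linarith)
    have hfac : (0:ℝ) < m.factorial := by exact_mod_cast m.factorial_pos
    calc ((m:ℝ) + 1) * (m.factorial : ℝ) * Real.Gamma (ν + 1)
        = ((m:ℝ) + 1) * ((m.factorial : ℝ) * Real.Gamma (ν + 1)) := by ring
      _ ≤ ((m:ℝ) + ν + 1) * Real.Gamma ((m : ℝ) + ν + 1) :=
          mul_le_mul (by linarith) ih (by positivity) (by linarith)

lemma my_key (s : ℝ) (hs : 0 ≤ s) (k : ℕ) :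
    (2 * (k:ℝ) + 1) * s ^ (2 * k) * 4 ^ k ≤
      3 * Real.exp (4 * s ^ 2) * ((2 * k).factorial : ℝ) := by
  have h1 : s ^ (2 * k) * 4 ^ k = (4 * s ^ 2) ^ k := by
    rw [mul_comm 2 k, pow_mul, mul_pow]; ring
  have hk : (0:ℝ) < k.factorial := by exact_mod_cast k.factorial_pos
  have h2 : (4 * s ^ 2) ^ k ≤ Real.exp (4 * s ^ 2) * k.factorial := by
    have h := Real.pow_div_factorial_le_exp (x := 4 * s ^ 2) (by positivity) k
    calc (4 * s ^ 2) ^ k = (4 * s ^ 2) ^ k / k.factorial * k.factorial := by field_simp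
      _ ≤ Real.exp (4 * s ^ 2) * k.factorial := mul_le_mul_of_nonneg_right h hk.le
  have h3 : (2 * (k:ℝ) + 1) ≤ 3 * k.factorial := by exact_mod_cast my_nat_fact k
  have h4 : ((k.factorial : ℝ)) * k.factorial ≤ ((2 * k).factorial : ℝ) := by
    have := Nat.le_of_dvd (2 * k).factorial_pos
      (by simpa [two_mul] using Nat.factorial_mul_factorial_dvd_factorial_add k k)
    exact_mod_cast this
  calc (2 * (k:ℝ) + 1) * s ^ (2 * k) * 4 ^ k
      = (2 * (k:ℝ) + 1) * (4 * s ^ 2) ^ k := by rw [mul_assoc, h1]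
    _ ≤ (3 * k.factorial) * (Real.exp (4 * s ^ 2) * k.factorial) :=
        mul_le_mul h3 h2 (by positivity) (by positivity)
    _ = 3 * Real.exp (4 * s ^ 2) * ((k.factorial : ℝ) * k.factorial) := by ring
    _ ≤ 3 * Real.exp (4 * s ^ 2) * ((2 * k).factorial : ℝ) :=
        mul_le_mul_of_nonneg_left h4 (by positivity)

lemma my_besselJ_bound (ν y : ℝ) (hν : 0 < ν) (hy : 0 < y) :
    |besselJ ν y| ≤ (y / 2) ^ ν * Real.exp ((y / 2) ^ 2) / Real.Gamma (ν + 1) := by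
  have hy2 : 0 < y / 2 := by linarith
  have hΓν : 0 < Real.Gamma (ν + 1) := Real.Gamma_pos_of_pos (by linarith)
  set f : ℕ → ℝ := fun m => (-1 : ℝ) ^ m * (y / 2) ^ (2 * (m : ℝ) + ν) /
    ((m.factorial : ℝ) * Real.Gamma ((m : ℝ) + ν + 1)) with hf
  set g : ℕ → ℝ := fun m => ((y / 2) ^ 2) ^ m / (m.factorial : ℝ) *
    ((y / 2) ^ ν / Real.Gamma (ν + 1)) with hg
  have hfg : ∀ m, |f m| ≤ g m := by
    intro m
    have hm : (0:ℝ) ≤ m := Nat.cast_nonneg m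
    have hΓ : 0 < Real.Gamma ((m : ℝ) + ν + 1) := Real.Gamma_pos_of_pos (by linarith)
    have hfacR : (0:ℝ) < m.factorial := by exact_mod_cast m.factorial_pos
    have habs : |f m| = (y / 2) ^ (2 * (m : ℝ) + ν) /
        ((m.factorial : ℝ) * Real.Gamma ((m : ℝ) + ν + 1)) := by
      rw [hf]
      rw [abs_div, abs_mul, abs_pow, abs_neg, abs_one, one_pow, one_mul,
        abs_of_pos (Real.rpow_pos_of_pos hy2 _), abs_of_pos (by positivity)]
    rw [habs]
    have hsplit : (y / 2) ^ (2 * (m : ℝ) + ν) = ((y / 2) ^ 2) ^ m * (y / 2) ^ ν := by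
      rw [Real.rpow_add hy2]
      congr 1
      rw [← pow_mul, ← Real.rpow_natCast (y / 2) (2 * m)]
      congr 1
      push_cast; ring
    rw [hsplit]
    have h1 : (m.factorial : ℝ) * Real.Gamma (ν + 1) ≤ Real.Gamma ((m : ℝ) + ν + 1) :=
      my_gamma_lower ν hν m
    have hrhs : g m = ((y / 2) ^ 2) ^ m * (y / 2) ^ ν /
        ((m.factorial : ℝ) * Real.Gamma (ν + 1)) := by
      show ((y / 2) ^ 2) ^ m / (m.factorial : ℝ) * ((y / 2) ^ ν / Real.Gamma (ν + 1)) = _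
      rw [div_mul_div_comm]
    rw [hrhs]
    have hΓle : Real.Gamma (ν + 1) ≤ Real.Gamma ((m : ℝ) + ν + 1) := by
      have hf1 : (1:ℝ) ≤ m.factorial := by exact_mod_cast m.factorial_pos
      nlinarith [h1, hΓν]
    gcongr
  have hg_sum : Summable g := (Real.summable_pow_div_factorial ((y / 2) ^ 2)).mul_right _
  have hf_abs : Summable fun m => |f m| :=
    Summable.of_nonneg_of_le (fun m => abs_nonneg _) hfg hg_sum
  have h5 : |besselJ ν y| ≤ ∑' m, |f m| := by
    have hb : besselJ ν y = ∑' m, f m := rfl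
    rw [hb]
    have := norm_tsum_le_tsum_norm (f := f) (by simpa [Real.norm_eq_abs] using hf_abs)
    simpa [Real.norm_eq_abs] using this
  have h6 : ∑' m, |f m| ≤ ∑' m, g m := Summable.tsum_le_tsum hfg hf_abs hg_sum
  have h7 : ∑' m, g m = Real.exp ((y / 2) ^ 2) * ((y / 2) ^ ν / Real.Gamma (ν + 1)) := by
    rw [hg, tsum_mul_right, my_exp_tsum]
  have h8 : Real.exp ((y / 2) ^ 2) * ((y / 2) ^ ν / Real.Gamma (ν + 1)) =
      (y / 2) ^ ν * Real.exp ((y / 2) ^ 2) / Real.Gamma (ν + 1) := by ring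
  linarith [h5, h6, h7.le, h7.ge]

lemma my_hankel_bound (α c R : ℝ) (hα : -(1 / 2 : ℝ) < α) (hc : 0 < c) (hR : 0 < R) :
    ∃ D > 0, ∀ (k : ℕ) (x : ℝ), 0 < x → x ≤ R →
      |hankelSphBesselJ α c k x| ≤ D / 4 ^ k := by
  have hΓα : 0 < Real.Gamma (α + 2) := Real.Gamma_pos_of_pos (by linarith)
  set t : ℝ := c * R / 2 with ht
  have ht0 : 0 < t := by rw [ht]; positivity
  set K : ℝ := (c / 2) ^ (α + 1) * R ^ (α + 1 / 2) * Real.exp (t ^ 2) with hK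
  have hK0 : 0 < K := by
    have h1 : (0:ℝ) < (c / 2) ^ (α + 1) := Real.rpow_pos_of_pos (by linarith) _
    have h2 : (0:ℝ) < R ^ (α + 1 / 2 : ℝ) := Real.rpow_pos_of_pos hR _
    rw [hK]; positivity
  refine ⟨6 * (|α| + 1) * K * Real.exp (4 * t ^ 2) / Real.Gamma (α + 2),
    div_pos (mul_pos (mul_pos (by positivity) hK0) (Real.exp_pos _)) hΓα, ?_⟩
  intro k x hx hxR
  have hkc : (0:ℝ) ≤ k := Nat.cast_nonneg k
  set ν : ℝ := 2 * (k : ℝ) + α + 1 with hν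
  have hν0 : 0 < ν := by rw [hν]; linarith
  have hcx : 0 < c * x := by positivity
  have hΓν : 0 < Real.Gamma (ν + 1) := Real.Gamma_pos_of_pos (by linarith)
  -- Step 1: rewrite the absolute value
  have h1 : |hankelSphBesselJ α c k x| = Real.sqrt (2 * ν) * |besselJ ν (c * x)| / Real.sqrt x := by
    unfold hankelSphBesselJ
    rw [abs_div, abs_mul, abs_of_nonneg (Real.sqrt_nonneg _), abs_of_nonneg (Real.sqrt_nonneg _)]
  have hJ : |besselJ ν (c * x)| ≤ (c * x / 2) ^ ν * Real.exp ((c * x / 2) ^ 2) / Real.Gamma (ν + 1) :=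
    my_besselJ_bound ν (c * x) hν0 hcx
  have h2 : |hankelSphBesselJ α c k x| ≤
      Real.sqrt (2 * ν) * ((c * x / 2) ^ ν * Real.exp ((c * x / 2) ^ 2) / Real.Gamma (ν + 1)) /
        Real.sqrt x := by
    rw [h1]
    gcongr
  -- Step 2: algebraic rewriting of the bound
  have hx12 : (0:ℝ) < x ^ (1 / 2 : ℝ) := Real.rpow_pos_of_pos hx _
  have e1 : Real.sqrt (2 * ν) *
        ((c * x / 2) ^ ν * Real.exp ((c * x / 2) ^ 2) / Real.Gamma (ν + 1)) / Real.sqrt x =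
      Real.sqrt (2 * ν) * ((c / 2) ^ ν * x ^ (ν - 1 / 2 : ℝ) * Real.exp ((c * x / 2) ^ 2)) /
        Real.Gamma (ν + 1) := by
    have hxsplit : ((c / 2) * x) ^ ν = (c / 2) ^ ν * (x ^ (ν - 1 / 2 : ℝ) * x ^ (1 / 2 : ℝ)) := by
      rw [Real.mul_rpow (by linarith) hx.le, ← Real.rpow_add hx]
      norm_num
    rw [show c * x / 2 = (c / 2) * x from by ring, hxsplit, Real.sqrt_eq_rpow x,
      div_eq_iff hx12.ne']
    field_simp
  -- Step 3: bound the pieces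
  have hsq : Real.sqrt (2 * ν) ≤ 2 * (|α| + 1) * (2 * (k:ℝ) + 1) := by
    have h2ν : (1:ℝ) ≤ 2 * ν := by rw [hν]; linarith
    have hs1 : Real.sqrt (2 * ν) ≤ 2 * ν := by
      calc Real.sqrt (2 * ν) ≤ Real.sqrt ((2 * ν) ^ 2) := Real.sqrt_le_sqrt (by nlinarith)
        _ = 2 * ν := Real.sqrt_sq (by linarith)
    have habs : α ≤ |α| := le_abs_self α
    have habs0 : 0 ≤ |α| := abs_nonneg α
    nlinarith [hs1]
  have hxR' : x ^ (ν - 1 / 2 : ℝ) ≤ R ^ (ν - 1 / 2 : ℝ) := by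
    apply Real.rpow_le_rpow hx.le hxR
    rw [hν]; linarith
  have hexp : Real.exp ((c * x / 2) ^ 2) ≤ Real.exp (t ^ 2) := by
    apply Real.exp_le_exp.mpr
    have h1 : 0 ≤ c * x / 2 := by positivity
    have h2 : c * x / 2 ≤ t := by rw [ht]; nlinarith
    exact pow_le_pow_left₀ h1 h2 2
  have hcp : (0:ℝ) < (c / 2) ^ ν := Real.rpow_pos_of_pos (by linarith) _
  have hRp : (0:ℝ) < R ^ (ν - 1 / 2 : ℝ) := Real.rpow_pos_of_pos hR _
  have e2 : Real.sqrt (2 * ν) * ((c / 2) ^ ν * x ^ (ν - 1 / 2 : ℝ) * Real.exp ((c * x / 2) ^ 2)) /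
        Real.Gamma (ν + 1) ≤
      (2 * (|α| + 1) * (2 * (k:ℝ) + 1)) *
        ((c / 2) ^ ν * R ^ (ν - 1 / 2 : ℝ) * Real.exp (t ^ 2)) / Real.Gamma (ν + 1) := by
    have hinner1 : (c / 2) ^ ν * x ^ (ν - 1 / 2 : ℝ) ≤ (c / 2) ^ ν * R ^ (ν - 1 / 2 : ℝ) :=
      mul_le_mul_of_nonneg_left hxR' hcp.le
    have hinner : (c / 2) ^ ν * x ^ (ν - 1 / 2 : ℝ) * Real.exp ((c * x / 2) ^ 2) ≤
        (c / 2) ^ ν * R ^ (ν - 1 / 2 : ℝ) * Real.exp (t ^ 2) :=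
      mul_le_mul hinner1 hexp (Real.exp_pos _).le (by positivity)
    have hnum : Real.sqrt (2 * ν) * ((c / 2) ^ ν * x ^ (ν - 1 / 2 : ℝ) * Real.exp ((c * x / 2) ^ 2)) ≤
        (2 * (|α| + 1) * (2 * (k:ℝ) + 1)) * ((c / 2) ^ ν * R ^ (ν - 1 / 2 : ℝ) * Real.exp (t ^ 2)) :=
      mul_le_mul hsq hinner (by positivity) (by positivity)
    exact div_le_div_of_nonneg_right hnum hΓν.le |>.trans_eq rfl
  -- Step 4: split the rpow powers
  have e3 : (c / 2) ^ ν * R ^ (ν - 1 / 2 : ℝ) =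
      t ^ (2 * k) * ((c / 2) ^ (α + 1) * R ^ (α + 1 / 2 : ℝ)) := by
    have hs1 : (c / 2 : ℝ) ^ ν = (c / 2) ^ (2 * k) * (c / 2) ^ (α + 1 : ℝ) := by
      rw [show ν = ((2 * k : ℕ) : ℝ) + (α + 1) from by rw [hν]; push_cast; ring,
        Real.rpow_add (by linarith), Real.rpow_natCast]
    have hs2 : (R : ℝ) ^ (ν - 1 / 2 : ℝ) = R ^ (2 * k) * R ^ (α + 1 / 2 : ℝ) := by
      rw [show ν - 1 / 2 = ((2 * k : ℕ) : ℝ) + (α + 1 / 2) from by rw [hν]; push_cast; ring,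
        Real.rpow_add hR, Real.rpow_natCast]
    calc (c / 2) ^ ν * R ^ (ν - 1 / 2 : ℝ)
        = ((c / 2) ^ (2 * k) * (c / 2) ^ (α + 1 : ℝ)) * (R ^ (2 * k) * R ^ (α + 1 / 2 : ℝ)) := by
          rw [hs1, hs2]
      _ = ((c / 2) * R) ^ (2 * k) * ((c / 2) ^ (α + 1 : ℝ) * R ^ (α + 1 / 2 : ℝ)) := by
          rw [mul_pow]; ring
      _ = t ^ (2 * k) * ((c / 2) ^ (α + 1 : ℝ) * R ^ (α + 1 / 2 : ℝ)) := by
          rw [show (c / 2) * R = t from by rw [ht]; ring]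
  -- Step 5: Gamma lower bound
  have hG : ((2 * k).factorial : ℝ) * Real.Gamma (α + 2) ≤ Real.Gamma (ν + 1) := by
    have h := my_gamma_lower (α + 1) (by linarith) (2 * k)
    rw [show (α + 1) + 1 = α + 2 from by ring] at h
    rw [show ((2 * k : ℕ) : ℝ) + (α + 1) + 1 = ν + 1 from by rw [hν]; push_cast; ring] at h
    exact h
  -- Step 6: final arithmetic
  have e4 : (2 * (|α| + 1) * (2 * (k:ℝ) + 1)) *
        ((c / 2) ^ ν * R ^ (ν - 1 / 2 : ℝ) * Real.exp (t ^ 2)) / Real.Gamma (ν + 1) ≤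
      6 * (|α| + 1) * K * Real.exp (4 * t ^ 2) / Real.Gamma (α + 2) / 4 ^ k := by
    rw [e3, div_div, div_le_div_iff₀ hΓν (by positivity)]
    calc (2 * (|α| + 1) * (2 * (k:ℝ) + 1)) *
          (t ^ (2 * k) * ((c / 2) ^ (α + 1 : ℝ) * R ^ (α + 1 / 2 : ℝ)) * Real.exp (t ^ 2)) *
          (Real.Gamma (α + 2) * 4 ^ k)
        = (2 * (|α| + 1) * K * Real.Gamma (α + 2)) * ((2 * (k:ℝ) + 1) * t ^ (2 * k) * 4 ^ k) := by
          rw [hK]; ring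
      _ ≤ (2 * (|α| + 1) * K * Real.Gamma (α + 2)) *
            (3 * Real.exp (4 * t ^ 2) * ((2 * k).factorial : ℝ)) := by
          apply mul_le_mul_of_nonneg_left (my_key t ht0.le k)
          exact mul_nonneg (mul_nonneg (by positivity) hK0.le) hΓα.le
      _ = (6 * (|α| + 1) * K * Real.exp (4 * t ^ 2)) * (((2 * k).factorial : ℝ) * Real.Gamma (α + 2)) := by
          ring
      _ ≤ (6 * (|α| + 1) * K * Real.exp (4 * t ^ 2)) * Real.Gamma (ν + 1) := by
          apply mul_le_mul_of_nonneg_left hG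
          exact mul_nonneg (mul_nonneg (by positivity) hK0.le) (Real.exp_pos _).le
  calc |hankelSphBesselJ α c k x| ≤ _ := h2
    _ = _ := e1
    _ ≤ _ := e2
    _ ≤ _ := e4

/-- If coefficients `b^n_k` satisfy `|b^n_0| ≤ M n^{−2}` and `|b^n_k| ≤ M n^{−|k−n|}` (`k ≥ 1`)
for `n ≥ n₀`, then for every `R > 0` there is `C > 0` such that for all `n ≥ max(n₀, 2)` and
`x ∈ (0, R]`, the series `Σ_k b^n_k j^α_{k,c}(x)` converges absolutely with
`Σ_k |b^n_k||j^α_{k,c}(x)| ≤ C n^{−2}`. -/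
theorem hankelSphBesselJ_series_bound (α c : ℝ) (hα : -(1 / 2 : ℝ) < α) (hc : 0 < c)
    (M : ℝ) (hM : 0 < M) (n₀ : ℕ) (b : ℕ → ℕ → ℂ)
    (hb0 : ∀ n : ℕ, n₀ ≤ n → ‖b n 0‖ ≤ M / (n : ℝ) ^ 2)
    (hbk : ∀ n : ℕ, n₀ ≤ n → ∀ k : ℕ, 1 ≤ k →
      ‖b n k‖ ≤ M / (n : ℝ) ^ (((k : ℤ) - (n : ℤ)).natAbs)) :
    ∀ R > (0 : ℝ), ∃ C > 0, ∀ n : ℕ, max n₀ 2 ≤ n → ∀ x : ℝ, 0 < x → x ≤ R →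
      Summable (fun k : ℕ => ‖b n k‖ * |hankelSphBesselJ α c k x|) ∧
      ∑' k : ℕ, ‖b n k‖ * |hankelSphBesselJ α c k x| ≤ C / (n : ℝ) ^ 2 := by
  intro R hR
  obtain ⟨D, hD, hDle⟩ := my_hankel_bound α c R hα hc hR
  refine ⟨8 * D * M, by positivity, ?_⟩
  intro n hn x hx hxR
  have hn2 : 2 ≤ n := le_trans (le_max_right _ _) hn
  have hn0 : n₀ ≤ n := le_trans (le_max_left _ _) hn
  have hnR : (2:ℝ) ≤ (n:ℝ) := by exact_mod_cast hn2
  have hnpos : (0:ℝ) < (n:ℝ) := by linarith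
  have hbound : ∀ k : ℕ, ‖b n k‖ * |hankelSphBesselJ α c k x| ≤
      (4 * D * M / (n : ℝ) ^ 2) * (1 / 2 : ℝ) ^ k := by
    intro k
    rcases Nat.eq_zero_or_pos k with rfl | hk
    · have h1 := hb0 n hn0
      have h2 := hDle 0 x hx hxR
      rw [pow_zero, div_one] at h2
      rw [pow_zero, mul_one]
      calc ‖b n 0‖ * |hankelSphBesselJ α c 0 x|
          ≤ (M / (n : ℝ) ^ 2) * D := mul_le_mul h1 h2 (abs_nonneg _) (by positivity)
        _ = M * D / (n : ℝ) ^ 2 := by ring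
        _ ≤ 4 * D * M / (n : ℝ) ^ 2 := by
            apply div_le_div_of_nonneg_right ?_ (by positivity)
            nlinarith
    · have h1 := hbk n hn0 k hk
      have h2 := hDle k x hx hxR
      set a : ℕ := ((k : ℤ) - (n : ℤ)).natAbs with hA
      have hstep : ‖b n k‖ * |hankelSphBesselJ α c k x| ≤
          (M / (n : ℝ) ^ a) * (D / 4 ^ k) := mul_le_mul h1 h2 (abs_nonneg _) (by positivity)
      refine hstep.trans ?_
      have hmain : (n : ℝ) ^ 2 ≤ 4 * (n : ℝ) ^ a * 2 ^ k := by
        rcases le_or_gt 2 a with ha | ha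
        · have h3 : (n : ℝ) ^ 2 ≤ (n : ℝ) ^ a := pow_le_pow_right₀ (by linarith) ha
          have h4 : (1:ℝ) ≤ 2 ^ k := by exact_mod_cast Nat.one_le_two_pow
          have h5 : (0:ℝ) ≤ (n:ℝ) ^ a := pow_nonneg (by linarith) a
          calc (n : ℝ) ^ 2 ≤ (n : ℝ) ^ a := h3
            _ = (n : ℝ) ^ a * 1 := (mul_one _).symm
            _ ≤ (n : ℝ) ^ a * 2 ^ k := mul_le_mul_of_nonneg_left h4 h5
            _ ≤ 4 * ((n : ℝ) ^ a * 2 ^ k) := by nlinarith [mul_nonneg h5 (by linarith : (0:ℝ) ≤ (2:ℝ) ^ k)]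
            _ = 4 * (n : ℝ) ^ a * 2 ^ k := by ring
        · have hkn : n ≤ k + 1 := by omega
          have h3 : (2:ℝ) ^ n ≤ 2 ^ (k + 1) := pow_le_pow_right₀ one_le_two hkn
          have h4 : (1:ℝ) ≤ (n : ℝ) ^ a := by
            calc (1:ℝ) = 1 ^ a := (one_pow a).symm
              _ ≤ (n : ℝ) ^ a := pow_le_pow_left₀ (by norm_num) (by linarith) a
          calc (n : ℝ) ^ 2 ≤ 2 * 2 ^ n := my_sq n
            _ ≤ 2 * 2 ^ (k + 1) := by linarith
            _ = 4 * 1 * 2 ^ k := by rw [pow_succ]; ring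
            _ ≤ 4 * (n : ℝ) ^ a * 2 ^ k := by
                apply mul_le_mul_of_nonneg_right ?_ (by positivity)
                linarith
      have lhs_eq : M / (n : ℝ) ^ a * (D / 4 ^ k) = M * D / ((n : ℝ) ^ a * 4 ^ k) := by
        rw [div_mul_div_comm]
      have rhs_eq : 4 * D * M / (n : ℝ) ^ 2 * (1 / 2 : ℝ) ^ k =
          (4 * D * M) / ((n : ℝ) ^ 2 * 2 ^ k) := by
        rw [div_pow, one_pow, div_mul_div_comm, mul_one]
      rw [lhs_eq, rhs_eq, div_le_div_iff₀ (by positivity) (by positivity)]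
      calc M * D * ((n : ℝ) ^ 2 * 2 ^ k) = (M * D * 2 ^ k) * (n : ℝ) ^ 2 := by ring
        _ ≤ (M * D * 2 ^ k) * (4 * (n : ℝ) ^ a * 2 ^ k) :=
            mul_le_mul_of_nonneg_left hmain (by positivity)
        _ = 4 * D * M * ((n : ℝ) ^ a * (2 ^ k * 2 ^ k)) := by ring
        _ = 4 * D * M * ((n : ℝ) ^ a * 4 ^ k) := by
            rw [← mul_pow]; norm_num
  have hg_sum : Summable fun k : ℕ => (4 * D * M / (n : ℝ) ^ 2) * (1 / 2 : ℝ) ^ k :=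
    summable_geometric_two.mul_left _
  have hfs : Summable fun k : ℕ => ‖b n k‖ * |hankelSphBesselJ α c k x| :=
    Summable.of_nonneg_of_le (fun k => mul_nonneg (norm_nonneg _) (abs_nonneg _))
      hbound hg_sum
  refine ⟨hfs, ?_⟩
  calc ∑' k : ℕ, ‖b n k‖ * |hankelSphBesselJ α c k x|
      ≤ ∑' k : ℕ, (4 * D * M / (n : ℝ) ^ 2) * (1 / 2 : ℝ) ^ k := Summable.tsum_le_tsum hbound hfs hg_sum
    _ = (4 * D * M / (n : ℝ) ^ 2) * 2 := by rw [tsum_mul_left, tsum_geometric_two]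
    _ = 8 * D * M / (n : ℝ) ^ 2 := by ring
end
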